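/- arXiv:1706.00474 — 15 statements merged into one kernel-verified Lean document; each statement's English description precedes it below -/
import Mathlib

section
/- Let (A, ·) be a left pre-Lie algebra and let α, β : A → A be linear maps such that α∘β = β∘α, α(x·y) = α(x)·α(y) and β(x·y) = β(x)·β(y) for all x, y ∈ A. Define a new multiplication on A by x*y = α(x)·β(y). Then (A, *, α, β) is a left BiHom-pre-Lie algebra, i.e. α∘β = β∘α, α(x*y) = α(x)*α(y), β(x*y) = β(x)*β(y), and αβ(x)*(α(y)*z) − (β(x)*α(y))*β(z) = αβ(y)*(α(x)*z) − (β(y)*α(x))*β(z) for all x, y, z ∈ A. -/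
/-- The Yau twist `x*y = α(x)·β(y)` of a left pre-Lie algebra `(A, ·)`
along commuting multiplicative linear maps `α, β` is a left BiHom-pre-Lie algebra. -/
theorem yau_twist_left_preLie {k A : Type*} [Field k] [AddCommGroup A] [Module k A]
    (m : A →ₗ[k] A →ₗ[k] A) (α β : A →ₗ[k] A)
    (hcomm : ∀ x, α (β x) = β (α x))
    (hα : ∀ x y, α (m x y) = m (α x) (α y))
    (hβ : ∀ x y, β (m x y) = m (β x) (β y))
    (hpre : ∀ x y z, m x (m y z) - m (m x y) z = m y (m x z) - m (m y x) z)
    (s : A → A → A) (hs : ∀ x y, s x y = m (α x) (β y)) :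
    (∀ x, α (β x) = β (α x)) ∧
    (∀ x y, α (s x y) = s (α x) (α y)) ∧
    (∀ x y, β (s x y) = s (β x) (β y)) ∧
    (∀ x y z, s (α (β x)) (s (α y) z) - s (s (β x) (α y)) (β z)
      = s (α (β y)) (s (α x) z) - s (s (β y) (α x)) (β z)) := by
  refine ⟨hcomm, ?_, ?_, ?_⟩
  · intro x y; simp only [hs, hα, hcomm]
  · intro x y; simp only [hs, hβ, hcomm]
  · intro x y z
    simp only [hs, hα, hβ, hcomm]
    have key := hpre (α (α (β x))) (α (α (β y))) (β (β z))
    simp only [hcomm] at key ⊢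
    exact key
end

section
/- Let (A, ·) be a right pre-Lie algebra and let α, β : A → A be linear maps such that α∘β = β∘α, α(x·y) = α(x)·α(y) and β(x·y) = β(x)·β(y) for all x, y ∈ A. Define a new multiplication on A by x*y = α(x)·β(y). Then (A, *, α, β) is a right BiHom-pre-Lie algebra, i.e. α∘β = β∘α, α(x*y) = α(x)*α(y), β(x*y) = β(x)*β(y), and α(x)*(β(y)*α(z)) − (x*β(y))*αβ(z) = α(x)*(β(z)*α(y)) − (x*β(z))*αβ(y) for all x, y, z ∈ A. -/
/-- The Yau twist `x*y = α(x)·β(y)` of a right pre-Lie algebra `(A, ·)`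
along commuting multiplicative linear maps `α, β` is a right BiHom-pre-Lie algebra. -/
theorem yau_twist_right_preLie {k A : Type*} [Field k] [AddCommGroup A] [Module k A]
    (m : A →ₗ[k] A →ₗ[k] A) (α β : A →ₗ[k] A)
    (hcomm : ∀ x, α (β x) = β (α x))
    (hα : ∀ x y, α (m x y) = m (α x) (α y))
    (hβ : ∀ x y, β (m x y) = m (β x) (β y))
    (hpre : ∀ x y z, m x (m y z) - m (m x y) z = m x (m z y) - m (m x z) y)
    (s : A → A → A) (hs : ∀ x y, s x y = m (α x) (β y)) :
    (∀ x, α (β x) = β (α x)) ∧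
    (∀ x y, α (s x y) = s (α x) (α y)) ∧
    (∀ x y, β (s x y) = s (β x) (β y)) ∧
    (∀ x y z, s (α x) (s (β y) (α z)) - s (s x (β y)) (α (β z))
      = s (α x) (s (β z) (α y)) - s (s x (β z)) (α (β y))) := by
  refine ⟨hcomm, fun x y => by rw [hs, hs, hα, hcomm],
    fun x y => by rw [hs, hs, hβ, hcomm], fun x y z => ?_⟩
  simp only [hs, hα, hβ, hcomm]
  exact hpre (α (α x)) (β (β (α y))) (β (β (α z)))
end

section
/- Let (A, ·, α, β) be a left BiHom-pre-Lie algebra such that α and β are bijective. Define [·,·] : A⊗A → A by [x, y] = x·y − (α⁻¹β(y))·(αβ⁻¹(x)) for all x, y ∈ A. Then (A, [·,·], α, β) is a BiHom-Lie algebra. -/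
/-- If `(A, ·, α, β)` is a left BiHom-pre-Lie algebra with `α, β` bijective,
then `[x,y] = x·y − (α⁻¹β(y))·(αβ⁻¹(x))` makes `(A, [·,·], α, β)` a BiHom-Lie algebra. -/
theorem left_biHom_preLie_to_biHomLie {k A : Type*} [Field k] [AddCommGroup A] [Module k A]
    (m : A →ₗ[k] A →ₗ[k] A) (α β : A ≃ₗ[k] A)
    (hcomm : ∀ x, α (β x) = β (α x))
    (hα : ∀ x y, α (m x y) = m (α x) (α y))
    (hβ : ∀ x y, β (m x y) = m (β x) (β y))
    (hpre : ∀ x y z, m (α (β x)) (m (α y) z) - m (m (β x) (α y)) (β z)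
      = m (α (β y)) (m (α x) z) - m (m (β y) (α x)) (β z))
    (br : A → A → A)
    (hbr : ∀ x y, br x y = m x y - m (α.symm (β y)) (α (β.symm x))) :
    (∀ x, α (β x) = β (α x)) ∧
    (∀ x y, α (br x y) = br (α x) (α y)) ∧
    (∀ x y, β (br x y) = br (β x) (β y)) ∧
    (∀ x y, br (β x) (α y) = - br (β y) (α x)) ∧
    (∀ x y z, br (β (β x)) (br (β y) (α z)) + br (β (β y)) (br (β z) (α x))
      + br (β (β z)) (br (β x) (α y)) = 0) := by
  have habs : ∀ t, α.symm (β t) = β (α.symm t) := by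
    intro t
    apply α.injective
    rw [α.apply_symm_apply, hcomm, α.apply_symm_apply]
  have hbsa : ∀ t, α (β.symm t) = β.symm (α t) := by
    intro t
    apply β.injective
    rw [← hcomm, β.apply_symm_apply, β.apply_symm_apply]
  have hαs : ∀ x y, α.symm (m x y) = m (α.symm x) (α.symm y) := by
    intro x y
    apply α.injective
    rw [α.apply_symm_apply, hα, α.apply_symm_apply, α.apply_symm_apply]
  refine ⟨hcomm, ?_, ?_, ?_, ?_⟩
  · intro x y
    simp only [hbr, map_sub, LinearMap.sub_apply, hα, hβ, hαs, habs, hbsa, hcomm,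
      LinearEquiv.apply_symm_apply, LinearEquiv.symm_apply_apply]
  · intro x y
    simp only [hbr, map_sub, LinearMap.sub_apply, hα, hβ, hαs, habs, hbsa, hcomm,
      LinearEquiv.apply_symm_apply, LinearEquiv.symm_apply_apply]
  · intro x y
    simp only [hbr, map_sub, LinearMap.sub_apply, hα, hβ, hαs, habs, hbsa, hcomm,
      LinearEquiv.apply_symm_apply, LinearEquiv.symm_apply_apply]
    abel
  · intro x y z
    have e1 := hpre (α.symm (β x)) (α.symm (β y)) (α z)
    have e2 := hpre (α.symm (β y)) (α.symm (β z)) (α x)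
    have e3 := hpre (α.symm (β z)) (α.symm (β x)) (α y)
    simp only [hbr, map_sub, LinearMap.sub_apply, hα, hβ, hαs, habs, hbsa, hcomm,
      LinearEquiv.apply_symm_apply, LinearEquiv.symm_apply_apply] at e1 e2 e3 ⊢
    calc (m (β (β x))) ((m (β y)) (α z)) - (m (β (β x))) ((m (β z)) (α y)) -
          ((m ((m (β (β (α.symm y)))) (β z))) (β (α x)) - (m ((m (β (β (α.symm z)))) (β y))) (β (α x))) +
        ((m (β (β y))) ((m (β z)) (α x)) - (m (β (β y))) ((m (β x)) (α z)) -
          ((m ((m (β (β (α.symm z)))) (β x))) (β (α y)) - (m ((m (β (β (α.symm x)))) (β z))) (β (α y)))) +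
      ((m (β (β z))) ((m (β x)) (α y)) - (m (β (β z))) ((m (β y)) (α x)) -
        ((m ((m (β (β (α.symm x)))) (β y))) (β (α z)) - (m ((m (β (β (α.symm y)))) (β x))) (β (α z))))
        = ((m (β (β x))) ((m (β y)) (α z)) - (m ((m (β (β (α.symm x)))) (β y))) (β (α z))
            - ((m (β (β y))) ((m (β x)) (α z)) - (m ((m (β (β (α.symm y)))) (β x))) (β (α z))))
          + ((m (β (β y))) ((m (β z)) (α x)) - (m ((m (β (β (α.symm y)))) (β z))) (β (α x))
            - ((m (β (β z))) ((m (β y)) (α x)) - (m ((m (β (β (α.symm z)))) (β y))) (β (α x))))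
          + ((m (β (β z))) ((m (β x)) (α y)) - (m ((m (β (β (α.symm z)))) (β x))) (β (α y))
            - ((m (β (β x))) ((m (β z)) (α y)) - (m ((m (β (β (α.symm x)))) (β z))) (β (α y)))) := by
          abel
      _ = 0 := by rw [e1, e2, e3]; abel
end

section
/- Let (A, ·, α, β) be a right BiHom-pre-Lie algebra such that α and β are bijective. Define [·,·] : A⊗A → A by [x, y] = x·y − (α⁻¹β(y))·(αβ⁻¹(x)) for all x, y ∈ A. Then (A, [·,·], α, β) is a BiHom-Lie algebra. -/
/-- If `(A, ·, α, β)` is a right BiHom-pre-Lie algebra with `α, β` bijective,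
then `[x,y] = x·y − (α⁻¹β(y))·(αβ⁻¹(x))` makes `(A, [·,·], α, β)` a BiHom-Lie algebra. -/
theorem right_biHom_preLie_to_biHomLie {k A : Type*} [Field k] [AddCommGroup A] [Module k A]
    (m : A →ₗ[k] A →ₗ[k] A) (α β : A ≃ₗ[k] A)
    (hcomm : ∀ x, α (β x) = β (α x))
    (hα : ∀ x y, α (m x y) = m (α x) (α y))
    (hβ : ∀ x y, β (m x y) = m (β x) (β y))
    (hpre : ∀ x y z, m (α x) (m (β y) (α z)) - m (m x (β y)) (α (β z))
      = m (α x) (m (β z) (α y)) - m (m x (β z)) (α (β y)))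
    (br : A → A → A)
    (hbr : ∀ x y, br x y = m x y - m (α.symm (β y)) (α (β.symm x))) :
    (∀ x, α (β x) = β (α x)) ∧
    (∀ x y, α (br x y) = br (α x) (α y)) ∧
    (∀ x y, β (br x y) = br (β x) (β y)) ∧
    (∀ x y, br (β x) (α y) = - br (β y) (α x)) ∧
    (∀ x y z, br (β (β x)) (br (β y) (α z)) + br (β (β y)) (br (β z) (α x))
      + br (β (β z)) (br (β x) (α y)) = 0) := by
  -- auxiliary commutation facts
  have hcs : ∀ x, α.symm (β x) = β (α.symm x) := by
    intro x
    apply α.injective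
    rw [α.apply_symm_apply, hcomm, α.apply_symm_apply]
  have hcs' : ∀ x, β.symm (α x) = α (β.symm x) := by
    intro x
    apply β.injective
    rw [β.apply_symm_apply, ← hcomm, β.apply_symm_apply]
  have hαs : ∀ x y, α.symm (m x y) = m (α.symm x) (α.symm y) := by
    intro x y
    apply α.injective
    rw [α.apply_symm_apply, hα, α.apply_symm_apply, α.apply_symm_apply]
  have eA : ∀ z, α.symm (β (α z)) = β z := by
    intro z
    rw [← hcomm, α.symm_apply_apply]
  -- simplified form of the bracket on (β y, α z)
  have hbr2 : ∀ y z, br (β y) (α z) = m (β y) (α z) - m (β z) (α y) := by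
    intro y z
    rw [hbr, eA, β.symm_apply_apply]
  refine ⟨hcomm, ?_, ?_, ?_, ?_⟩
  · intro x y
    rw [hbr, hbr, map_sub, hα, hα, α.apply_symm_apply, eA, hcs']
  · intro x y
    rw [hbr, hbr, map_sub, hβ, hβ, ← hcomm, β.apply_symm_apply, ← hcs, β.symm_apply_apply]
  · intro x y
    rw [hbr2, hbr2]
    abel
  · intro x y z
    -- key expansion of each Jacobi term
    have key : ∀ x y z : A, br (β (β x)) (br (β y) (α z))
        = m (m (α.symm (β (β x))) (β y)) (α (β z))
          - m (m (α.symm (β (β x))) (β z)) (α (β y))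
          - m (m (α.symm (β (β y))) (β z)) (α (β x))
          + m (m (α.symm (β (β z))) (β y)) (α (β x)) := by
      intro x y z
      rw [hbr, hbr2]
      have h1 : α.symm (β (m (β y) (α z) - m (β z) (α y)))
          = m (α.symm (β (β y))) (β z) - m (α.symm (β (β z))) (β y) := by
        simp only [map_sub, hβ, hαs, eA]
      have h2 : β.symm (β (β x)) = β x := β.symm_apply_apply _
      rw [h1, h2, map_sub, map_sub, LinearMap.sub_apply]
      -- use the pre-Lie identity with first argument α.symm (β (β x))
      have hp := hpre (α.symm (β (β x))) y z
      rw [α.apply_symm_apply] at hp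
      have h3 : m (β (β x)) (m (β y) (α z)) - m (β (β x)) (m (β z) (α y))
          = m (m (α.symm (β (β x))) (β y)) (α (β z))
            - m (m (α.symm (β (β x))) (β z)) (α (β y)) :=
        sub_eq_sub_iff_sub_eq_sub.mp hp
      rw [sub_sub, ← h3]
      abel
    rw [key x y z, key y z x, key z x y]
    abel
end

section
/- Let (A, ≺, ≻, α, β) be a BiHom-dendriform algebra such that α and β are bijective. Define ⊳ : A⊗A → A by x⊳y = x≻y − (α⁻¹β(y))≺(αβ⁻¹(x)) for all x, y ∈ A. Then (A, ⊳, α, β) is a left BiHom-pre-Lie algebra. -/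
/-- If `(A, ≺, ≻, α, β)` is a BiHom-dendriform algebra with `α, β` bijective,
then `x⊳y = x≻y − (α⁻¹β(y))≺(αβ⁻¹(x))` makes `(A, ⊳, α, β)` a left BiHom-pre-Lie algebra. -/
theorem biHom_dendriform_to_left_preLie {k A : Type*} [Field k] [AddCommGroup A] [Module k A]
    (p s : A →ₗ[k] A →ₗ[k] A)  -- p is ≺, s is ≻
    (α β : A ≃ₗ[k] A)
    (hcomm : ∀ x, α (β x) = β (α x))
    (hαp : ∀ x y, α (p x y) = p (α x) (α y))
    (hαs : ∀ x y, α (s x y) = s (α x) (α y))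
    (hβp : ∀ x y, β (p x y) = p (β x) (β y))
    (hβs : ∀ x y, β (s x y) = s (β x) (β y))
    (hd1 : ∀ x y z, p (p x y) (β z) = p (α x) (p y z + s y z))
    (hd2 : ∀ x y z, p (s x y) (β z) = s (α x) (p y z))
    (hd3 : ∀ x y z, s (α x) (s y z) = s (p x y + s x y) (β z))
    (rhd : A → A → A)
    (hrhd : ∀ x y, rhd x y = s x y - p (α.symm (β y)) (α (β.symm x))) :
    (∀ x, α (β x) = β (α x)) ∧
    (∀ x y, α (rhd x y) = rhd (α x) (α y)) ∧
    (∀ x y, β (rhd x y) = rhd (β x) (β y)) ∧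
    (∀ x y z, rhd (α (β x)) (rhd (α y) z) - rhd (rhd (β x) (α y)) (β z)
      = rhd (α (β y)) (rhd (α x) z) - rhd (rhd (β y) (α x)) (β z)) := by
  -- commutation lemmas: normal form has α-powers outermost, then β-powers
  have hba : ∀ x, β (α x) = α (β x) := fun x => (hcomm x).symm
  have hc1 : ∀ x, β (α.symm x) = α.symm (β x) := fun x =>
    α.injective (by rw [hcomm, LinearEquiv.apply_symm_apply, LinearEquiv.apply_symm_apply])
  have hc2 : ∀ x, β.symm (α x) = α (β.symm x) := fun x =>
    β.injective (by rw [LinearEquiv.apply_symm_apply, ← hcomm, LinearEquiv.apply_symm_apply])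
  have hc3 : ∀ x, β.symm (α.symm x) = α.symm (β.symm x) := fun x =>
    β.injective (by rw [LinearEquiv.apply_symm_apply, hc1, LinearEquiv.apply_symm_apply])
  have hαp' : ∀ x y, α.symm (p x y) = p (α.symm x) (α.symm y) := fun x y =>
    α.injective (by rw [LinearEquiv.apply_symm_apply, hαp,
      LinearEquiv.apply_symm_apply, LinearEquiv.apply_symm_apply])
  have hαs' : ∀ x y, α.symm (s x y) = s (α.symm x) (α.symm y) := fun x y =>
    α.injective (by rw [LinearEquiv.apply_symm_apply, hαs,
      LinearEquiv.apply_symm_apply, LinearEquiv.apply_symm_apply])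
  have hβp' : ∀ x y, β.symm (p x y) = p (β.symm x) (β.symm y) := fun x y =>
    β.injective (by rw [LinearEquiv.apply_symm_apply, hβp,
      LinearEquiv.apply_symm_apply, LinearEquiv.apply_symm_apply])
  have hβs' : ∀ x y, β.symm (s x y) = s (β.symm x) (β.symm y) := fun x y =>
    β.injective (by rw [LinearEquiv.apply_symm_apply, hβs,
      LinearEquiv.apply_symm_apply, LinearEquiv.apply_symm_apply])
  refine ⟨hcomm, ?_, ?_, ?_⟩
  · intro x y
    simp only [hrhd, map_sub, map_add, LinearMap.sub_apply, LinearMap.add_apply,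
      hαp, hαs, hβp, hβs, hαp', hαs', hβp', hβs', hba, hc1, hc2, hc3,
      LinearEquiv.symm_apply_apply, LinearEquiv.apply_symm_apply]
  · intro x y
    simp only [hrhd, map_sub, map_add, LinearMap.sub_apply, LinearMap.add_apply,
      hαp, hαs, hβp, hβs, hαp', hαs', hβp', hβs', hba, hc1, hc2, hc3,
      LinearEquiv.symm_apply_apply, LinearEquiv.apply_symm_apply]
  · have key : ∀ x y z, rhd (α (β x)) (rhd (α y) z) - rhd (rhd (β x) (α y)) (β z)
      = s (p (β x) (α y)) (β z) + s (p (β y) (α x)) (β z)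
        - p (s (β x) (α.symm (β z))) (α (α y))
        - p (s (β y) (α.symm (β z))) (α (α x))
        + p (α.symm (β (β z))) (s (α y) (α (α (β.symm x))))
        + p (α.symm (β (β z))) (s (α x) (α (α (β.symm y)))) := by
      intro x y z
      have E1 := hd3 (β x) (α y) z
      have E2 := hd2 (β x) (α.symm (β z)) (α (α (β.symm y)))
      have E3 := hd1 (α.symm (α.symm (β (β z)))) (α y) (α (α (β.symm x)))
      simp only [hrhd, map_sub, map_add, LinearMap.sub_apply, LinearMap.add_apply,
        hαp, hαs, hβp, hβs, hαp', hαs', hβp', hβs', hba, hc1, hc2, hc3,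
        LinearEquiv.symm_apply_apply, LinearEquiv.apply_symm_apply] at E1 E2 E3 ⊢
      rw [E1, ← E2, E3]
      abel
    intro x y z
    rw [key x y z, key y x z]
    abel
end

section
/- Let (A, ≺, ≻, α, β) be a BiHom-dendriform algebra such that α and β are bijective. Define ⊲ : A⊗A → A by x⊲y = x≺y − (α⁻¹β(y))≻(αβ⁻¹(x)) for all x, y ∈ A. Then (A, ⊲, α, β) is a right BiHom-pre-Lie algebra. -/
/-- If `(A, ≺, ≻, α, β)` is a BiHom-dendriform algebra with `α, β` bijective,
then `x⊲y = x≺y − (α⁻¹β(y))≻(αβ⁻¹(x))` makes `(A, ⊲, α, β)` a right BiHom-pre-Lie algebra. -/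
theorem biHom_dendriform_to_right_preLie {k A : Type*} [Field k] [AddCommGroup A] [Module k A]
    (p s : A →ₗ[k] A →ₗ[k] A)  -- p is ≺, s is ≻
    (α β : A ≃ₗ[k] A)
    (hcomm : ∀ x, α (β x) = β (α x))
    (hαp : ∀ x y, α (p x y) = p (α x) (α y))
    (hαs : ∀ x y, α (s x y) = s (α x) (α y))
    (hβp : ∀ x y, β (p x y) = p (β x) (β y))
    (hβs : ∀ x y, β (s x y) = s (β x) (β y))
    (hd1 : ∀ x y z, p (p x y) (β z) = p (α x) (p y z + s y z))
    (hd2 : ∀ x y z, p (s x y) (β z) = s (α x) (p y z))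
    (hd3 : ∀ x y z, s (α x) (s y z) = s (p x y + s x y) (β z))
    (lhd : A → A → A)
    (hlhd : ∀ x y, lhd x y = p x y - s (α.symm (β y)) (α (β.symm x))) :
    (∀ x, α (β x) = β (α x)) ∧
    (∀ x y, α (lhd x y) = lhd (α x) (α y)) ∧
    (∀ x y, β (lhd x y) = lhd (β x) (β y)) ∧
    (∀ x y z, lhd (α x) (lhd (β y) (α z)) - lhd (lhd x (β y)) (α (β z))
      = lhd (α x) (lhd (β z) (α y)) - lhd (lhd x (β z)) (α (β y))) := by
  -- commute rules, pushing β (and β.symm) inside α (and α.symm)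
  have c1 : ∀ x, β (α x) = α (β x) := fun x => (hcomm x).symm
  have c2 : ∀ x, β (α.symm x) = α.symm (β x) := by
    intro x; apply α.injective; rw [hcomm, α.apply_symm_apply, α.apply_symm_apply]
  have c3 : ∀ x, β.symm (α x) = α (β.symm x) := by
    intro x; apply β.injective; rw [β.apply_symm_apply, ← hcomm, β.apply_symm_apply]
  have c4 : ∀ x, β.symm (α.symm x) = α.symm (β.symm x) := by
    intro x; apply β.injective; rw [β.apply_symm_apply, c2, β.apply_symm_apply]
  -- symm maps are multiplicative
  have hα'p : ∀ x y, α.symm (p x y) = p (α.symm x) (α.symm y) := by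
    intro x y; apply α.injective; rw [α.apply_symm_apply, hαp, α.apply_symm_apply, α.apply_symm_apply]
  have hα's : ∀ x y, α.symm (s x y) = s (α.symm x) (α.symm y) := by
    intro x y; apply α.injective; rw [α.apply_symm_apply, hαs, α.apply_symm_apply, α.apply_symm_apply]
  have hβ'p : ∀ x y, β.symm (p x y) = p (β.symm x) (β.symm y) := by
    intro x y; apply β.injective; rw [β.apply_symm_apply, hβp, β.apply_symm_apply, β.apply_symm_apply]
  have hβ's : ∀ x y, β.symm (s x y) = s (β.symm x) (β.symm y) := by
    intro x y; apply β.injective; rw [β.apply_symm_apply, hβs, β.apply_symm_apply, β.apply_symm_apply]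
  refine ⟨hcomm, ?_, ?_, ?_⟩
  · intro x y
    simp only [hlhd, map_sub, hαp, hαs, c1, c2, c3, c4,
      LinearEquiv.apply_symm_apply, LinearEquiv.symm_apply_apply]
  · intro x y
    simp only [hlhd, map_sub, hβp, hβs, c1, c2, c3, c4,
      LinearEquiv.apply_symm_apply, LinearEquiv.symm_apply_apply]
  · intro x y z
    have e1y := hd1 x (β y) (α z)
    have e1z := hd1 x (β z) (α y)
    have e2y := hd2 (α.symm (β (β y))) (α (β.symm x)) (α z)
    have e2z := hd2 (α.symm (β (β z))) (α (β.symm x)) (α y)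
    have e3y := hd3 (α.symm (β (β z))) (β y) (α (α (β.symm (β.symm x))))
    have e3z := hd3 (α.symm (β (β y))) (β z) (α (α (β.symm (β.symm x))))
    simp only [hlhd, map_sub, map_add, LinearMap.sub_apply, LinearMap.add_apply,
      hαp, hαs, hβp, hβs, hα'p, hα's, hβ'p, hβ's, c1, c2, c3, c4,
      LinearEquiv.apply_symm_apply, LinearEquiv.symm_apply_apply] at e1y e1z e2y e2z e3y e3z ⊢
    rw [e1y, e1z, e2y, e2z, e3y, e3z]
    abel
end

section
/- Let (L, [·,·]) be a left Leibniz algebra and let α, β : L → L be commuting linear maps such that α([x,y]) = [α(x),α(y)] and β([x,y]) = [β(x),β(y)] for all x, y ∈ L. Define {x, y} = [α(x), β(y)] for all x, y ∈ L. Then (L, {·,·}, α, β) is a left BiHom-Leibniz algebra. -/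
/-- The Yau twist `{x,y} = [α(x), β(y)]` of a left Leibniz algebra
along commuting multiplicative linear maps `α, β` is a left BiHom-Leibniz algebra. -/
theorem yau_twist_left_leibniz {k L : Type*} [Field k] [AddCommGroup L] [Module k L]
    (br : L →ₗ[k] L →ₗ[k] L) (α β : L →ₗ[k] L)
    (hcomm : ∀ x, α (β x) = β (α x))
    (hα : ∀ x y, α (br x y) = br (α x) (α y))
    (hβ : ∀ x y, β (br x y) = br (β x) (β y))
    (hleib : ∀ x y z, br x (br y z) = br (br x y) z + br y (br x z))
    (nb : L → L → L) (hnb : ∀ x y, nb x y = br (α x) (β y)) :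
    (∀ x, α (β x) = β (α x)) ∧
    (∀ x y, α (nb x y) = nb (α x) (α y)) ∧
    (∀ x y, β (nb x y) = nb (β x) (β y)) ∧
    (∀ x y z, nb (α (β x)) (nb y z) = nb (nb (β x) y) (β z) + nb (β y) (nb (α x) z)) := by
  refine ⟨hcomm, ?_, ?_, ?_⟩
  · intro x y; simp only [hnb, hα]; rw [hcomm]
  · intro x y; simp only [hnb, hβ]; rw [hcomm]
  · intro x y z
    simp only [hnb, hα, hβ]
    have h := hleib (α (α (β x))) (α (β y)) (β (β z))
    simp only [hcomm] at h ⊢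
    exact h
end

section
/- Let (L, [·,·]) be a right Leibniz algebra and let α, β : L → L be commuting linear maps such that α([x,y]) = [α(x),α(y)] and β([x,y]) = [β(x),β(y)] for all x, y ∈ L. Define {x, y} = [α(x), β(y)] for all x, y ∈ L. Then (L, {·,·}, α, β) is a right BiHom-Leibniz algebra. -/
/-- The Yau twist `{x,y} = [α(x), β(y)]` of a right Leibniz algebra
along commuting multiplicative linear maps `α, β` is a right BiHom-Leibniz algebra. -/
theorem yau_twist_right_leibniz {k L : Type*} [Field k] [AddCommGroup L] [Module k L]
    (br : L →ₗ[k] L →ₗ[k] L) (α β : L →ₗ[k] L)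
    (hcomm : ∀ x, α (β x) = β (α x))
    (hα : ∀ x y, α (br x y) = br (α x) (α y))
    (hβ : ∀ x y, β (br x y) = br (β x) (β y))
    (hleib : ∀ x y z, br (br x y) z = br (br x z) y + br x (br y z))
    (nb : L → L → L) (hnb : ∀ x y, nb x y = br (α x) (β y)) :
    (∀ x, α (β x) = β (α x)) ∧
    (∀ x y, α (nb x y) = nb (α x) (α y)) ∧
    (∀ x y, β (nb x y) = nb (β x) (β y)) ∧
    (∀ x y z, nb (nb x y) (α (β z)) = nb (nb x (β z)) (α y) + nb (α x) (nb y (α z))) := by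
  refine ⟨hcomm, ?_, ?_, ?_⟩
  · intro x y; simp only [hnb, hα, hcomm]
  · intro x y; simp only [hnb, hβ, hα, hcomm]
  · intro x y z
    simp only [hnb, hα, hβ, hcomm]
    rw [hleib]
end

section
/- Let L be a vector space, [·,·] : L×L → L a bilinear map, and α, β : L → L commuting bijective linear maps such that α([x,y]) = [α(x),α(y)], β([x,y]) = [β(x),β(y)], and the BiHom-skew-symmetry condition [β(x),α(y)] = −[β(y),α(x)] holds for all x, y ∈ L. Then the BiHom-Jacobi condition [β²(x),[β(y),α(z)]] + [β²(y),[β(z),α(x)]] + [β²(z),[β(x),α(y)]] = 0 holds for all x, y, z ∈ L if and only if the left BiHom-Leibniz identity [αβ(x),[y,z]] = [[β(x),y],β(z)] + [β(y),[α(x),z]] holds for all x, y, z ∈ L. -/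
/-- Under BiHom-skew-symmetry with bijective commuting multiplicative
structure maps, the BiHom-Jacobi condition is equivalent to the left BiHom-Leibniz identity. -/
theorem biHom_jacobi_iff_left_leibniz {k L : Type*} [Field k] [AddCommGroup L] [Module k L]
    (br : L →ₗ[k] L →ₗ[k] L) (α β : L ≃ₗ[k] L)
    (hcomm : ∀ x, α (β x) = β (α x))
    (hα : ∀ x y, α (br x y) = br (α x) (α y))
    (hβ : ∀ x y, β (br x y) = br (β x) (β y))
    (hskew : ∀ x y, br (β x) (α y) = - br (β y) (α x)) :
    (∀ x y z, br (β (β x)) (br (β y) (α z)) + br (β (β y)) (br (β z) (α x))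
        + br (β (β z)) (br (β x) (α y)) = 0)
    ↔ (∀ x y z, br (α (β x)) (br y z) = br (br (β x) y) (β z) + br (β y) (br (α x) z)) := by
  constructor
  · intro h x y z
    have H := h (β.symm (α x)) (β.symm y) (α.symm z)
    simp only [LinearEquiv.apply_symm_apply] at H
    -- t2 inner: br (β (α.symm z)) (α (β.symm (α x))) = - br (α x) z
    rw [hskew (α.symm z) (β.symm (α x))] at H
    simp only [LinearEquiv.apply_symm_apply] at H
    -- t3 inner: br (α x) (α (β.symm y)) = α (br x (β.symm y))
    rw [← hα x (β.symm y)] at H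
    -- t3: br (β (β (α.symm z))) (α w) = - br (β w) (α (β (α.symm z)))
    rw [hskew (β (α.symm z)) (br x (β.symm y)), hcomm (α.symm z), hβ x (β.symm y)] at H
    simp only [LinearEquiv.apply_symm_apply, map_neg, ← hcomm] at H
    rw [add_neg_eq_zero] at H
    rw [← H]
    abel
  · intro h x y z
    have H := h (α.symm (β x)) (β y) (α z)
    rw [hcomm (α.symm (β x))] at H
    simp only [LinearEquiv.apply_symm_apply] at H
    rw [← hβ (α.symm (β x)) y, show β (α z) = α (β z) from (hcomm z).symm,
      hskew (br (α.symm (β x)) y) (β z), hα (α.symm (β x)) y,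
      hskew x z] at H
    simp only [LinearEquiv.apply_symm_apply, map_neg] at H
    rw [H]
    abel
end

section
/- Let L be a vector space, [·,·] : L×L → L a bilinear map, and α, β : L → L commuting bijective linear maps such that α([x,y]) = [α(x),α(y)], β([x,y]) = [β(x),β(y)], and the BiHom-skew-symmetry condition [β(x),α(y)] = −[β(y),α(x)] holds for all x, y ∈ L. Then the left BiHom-Leibniz identity [αβ(x),[y,z]] = [[β(x),y],β(z)] + [β(y),[α(x),z]] holds for all x, y, z ∈ L if and only if the right BiHom-Leibniz identity [[x,y],αβ(z)] = [[x,β(z)],α(y)] + [α(x),[y,α(z)]] holds for all x, y, z ∈ L. -/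
/-- Under BiHom-skew-symmetry with bijective commuting multiplicative
structure maps, the left BiHom-Leibniz identity is equivalent to the right one. -/
theorem left_leibniz_iff_right_leibniz {k L : Type*} [Field k] [AddCommGroup L] [Module k L]
    (br : L →ₗ[k] L →ₗ[k] L) (α β : L ≃ₗ[k] L)
    (hcomm : ∀ x, α (β x) = β (α x))
    (hα : ∀ x y, α (br x y) = br (α x) (α y))
    (hβ : ∀ x y, β (br x y) = br (β x) (β y))
    (hskew : ∀ x y, br (β x) (α y) = - br (β y) (α x)) :
    (∀ x y z, br (α (β x)) (br y z) = br (br (β x) y) (β z) + br (β y) (br (α x) z))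
    ↔ (∀ x y z, br (br x y) (α (β z)) = br (br x (β z)) (α y) + br (α x) (br y (α z))) := by
  have hβ' : ∀ u v, β.symm (br u v) = br (β.symm u) (β.symm v) := by
    intro u v
    have h := hβ (β.symm u) (β.symm v)
    simp only [LinearEquiv.apply_symm_apply] at h
    rw [← h, LinearEquiv.symm_apply_apply]
  have hα' : ∀ u v, α.symm (br u v) = br (α.symm u) (α.symm v) := by
    intro u v
    have h := hα (α.symm u) (α.symm v)
    simp only [LinearEquiv.apply_symm_apply] at h
    rw [← h, LinearEquiv.symm_apply_apply]
  constructor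
  · intro h x y z
    have e1 : br (br x y) (α (β z)) =
        - br (β (β z)) (br (α (β.symm x)) (α (β.symm y))) := by
      calc br (br x y) (α (β z))
          = br (β (β.symm (br x y))) (α (β z)) := by rw [β.apply_symm_apply]
        _ = - br (β (β z)) (α (β.symm (br x y))) := hskew _ _
        _ = - br (β (β z)) (br (α (β.symm x)) (α (β.symm y))) := by rw [hβ', hα]
    have key := h (α.symm (β z)) (α (β.symm x)) (α (β.symm y))
    -- massage key
    have c1 : α (β (α.symm (β z))) = β (β z) := by
      rw [hcomm, α.apply_symm_apply]
    have c2 : β (α (β.symm y)) = α y := by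
      rw [← hcomm, β.apply_symm_apply]
    have c3 : β (α (β.symm x)) = α x := by
      rw [← hcomm, β.apply_symm_apply]
    have c4 : α (α.symm (β z)) = β z := α.apply_symm_apply _
    rw [c1, c2, c3, c4] at key
    have f1 : br (β (α.symm (β z))) (α (β.symm x)) = - br x (β z) := by
      have := hskew (α.symm (β z)) (β.symm x)
      rw [this, β.apply_symm_apply, α.apply_symm_apply]
    have f2 : br (β z) (α (β.symm y)) = - br y (α z) := by
      have := hskew z (β.symm y)
      rw [this, β.apply_symm_apply]
    rw [f1, f2] at key
    rw [e1, key]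
    simp only [map_neg, LinearMap.map_neg₂, LinearMap.neg_apply]
    abel
  · intro h x y z
    have e1 : br (α (β x)) (br y z) =
        - br (br (β (α.symm y)) (β (α.symm z))) (α (α x)) := by
      calc br (α (β x)) (br y z)
          = br (β (α x)) (α (α.symm (br y z))) := by rw [hcomm, α.apply_symm_apply]
        _ = - br (β (α.symm (br y z))) (α (α x)) := hskew _ _
        _ = - br (br (β (α.symm y)) (β (α.symm z))) (α (α x)) := by rw [hα', hβ]
    have key := h (β (α.symm y)) (β (α.symm z)) (β.symm (α x))
    have c1 : α (β (β.symm (α x))) = α (α x) := by rw [β.apply_symm_apply]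
    have c2 : β (β.symm (α x)) = α x := β.apply_symm_apply _
    have c3 : α (β (α.symm z)) = β z := by rw [hcomm, α.apply_symm_apply]
    have c4 : α (β (α.symm y)) = β y := by rw [hcomm, α.apply_symm_apply]
    rw [c1, c2, c3, c4] at key
    have f1 : br (β (α.symm y)) (α x) = - br (β x) y := by
      have := hskew (α.symm y) x
      rw [this, α.apply_symm_apply]
    have f2 : br (β (α.symm z)) (α (β.symm (α x))) = - br (α x) z := by
      have := hskew (α.symm z) (β.symm (α x))
      rw [this, β.apply_symm_apply, α.apply_symm_apply]
    rw [f1, f2] at key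
    rw [e1, key]
    simp only [map_neg, LinearMap.map_neg₂, LinearMap.neg_apply]
    abel
end

section
/- Let L be a vector space, [·,·] : L×L → L a bilinear map, and α, β : L → L commuting bijective linear maps such that α([x,y]) = [α(x),α(y)], β([x,y]) = [β(x),β(y)], and the BiHom-skew-symmetry condition [β(x),α(y)] = −[β(y),α(x)] holds for all x, y ∈ L. Then the BiHom-Jacobi condition [β²(x),[β(y),α(z)]] + [β²(y),[β(z),α(x)]] + [β²(z),[β(x),α(y)]] = 0 holds for all x, y, z ∈ L if and only if [[β(x),α(y)],α²(z)] + [[β(y),α(z)],α²(x)] + [[β(z),α(x)],α²(y)] = 0 holds for all x, y, z ∈ L. -/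
/-- Under BiHom-skew-symmetry with bijective commuting multiplicative
structure maps, the BiHom-Jacobi condition is equivalent to the cyclic condition
`[[β(x),α(y)],α²(z)] + [[β(y),α(z)],α²(x)] + [[β(z),α(x)],α²(y)] = 0`. -/
theorem biHom_jacobi_iff_cyclic {k L : Type*} [Field k] [AddCommGroup L] [Module k L]
    (br : L →ₗ[k] L →ₗ[k] L) (α β : L ≃ₗ[k] L)
    (hcomm : ∀ x, α (β x) = β (α x))
    (hα : ∀ x y, α (br x y) = br (α x) (α y))
    (hβ : ∀ x y, β (br x y) = br (β x) (β y))
    (hskew : ∀ x y, br (β x) (α y) = - br (β y) (α x)) :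
    (∀ x y z, br (β (β x)) (br (β y) (α z)) + br (β (β y)) (br (β z) (α x))
        + br (β (β z)) (br (β x) (α y)) = 0)
    ↔ (∀ x y z, br (br (β x) (α y)) (α (α z)) + br (br (β y) (α z)) (α (α x))
        + br (br (β z) (α x)) (α (α y)) = 0) := by
  set g : L → L := fun a => α.symm (β a) with hg
  have hαg : ∀ a, α (g a) = β a := fun a => α.apply_symm_apply _
  have hginv : ∀ t, g (β.symm (α t)) = t := by
    intro t; simp [hg]
  have hcomm' : ∀ w, β (α.symm w) = α.symm (β w) := by
    intro w
    apply α.injective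
    rw [hcomm, α.apply_symm_apply, α.apply_symm_apply]
  have hαsymm_br : ∀ u v, α.symm (br u v) = br (α.symm u) (α.symm v) := by
    intro u v
    apply α.injective
    rw [α.apply_symm_apply, hα, α.apply_symm_apply, α.apply_symm_apply]
  have key : ∀ x y z, br (β (β x)) (br (β y) (α z))
      = - br (br (β (g y)) (α (g z))) (α (α (g x))) := by
    intro x y z
    have h1 : br (β y) (α z) = α (α.symm (br (β y) (α z))) := (α.apply_symm_apply _).symm
    rw [h1, hskew]
    have hc3 : α.symm (β (α z)) = β z := by apply α.injective; rw [α.apply_symm_apply, hcomm]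
    have h2 : β (α.symm (br (β y) (α z))) = br (β (g y)) (α (g z)) := by
      simp only [hg, hcomm', hβ, hαsymm_br, hc3, α.apply_symm_apply]
    have h3 : α (β x) = α (α (g x)) := by rw [hαg]
    rw [h2, h3]
  constructor
  · intro H x y z
    have h := H (β.symm (α x)) (β.symm (α y)) (β.symm (α z))
    rw [key, key, key] at h
    simp only [hginv] at h
    rw [show br (br (β x) (α y)) (α (α z)) + br (br (β y) (α z)) (α (α x))
        + br (br (β z) (α x)) (α (α y))
      = -(-br (br (β y) (α z)) (α (α x)) + -br (br (β z) (α x)) (α (α y))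
        + -br (br (β x) (α y)) (α (α z))) by abel, h, neg_zero]
  · intro H x y z
    rw [key x y z, key y z x, key z x y]
    have h := H (g x) (g y) (g z)
    rw [show -br (br (β (g y)) (α (g z))) (α (α (g x)))
        + -br (br (β (g z)) (α (g x))) (α (α (g y)))
        + -br (br (β (g x)) (α (g y))) (α (α (g z)))
      = -(br (br (β (g x)) (α (g y))) (α (α (g z)))
        + br (br (β (g y)) (α (g z))) (α (α (g x)))
        + br (br (β (g z)) (α (g x))) (α (α (g y)))) by abel, h, neg_zero]
end

section
/- Let (L, [·,·], α, β) be a left BiHom-Lie algebra and let R : L → L be a Rota-Baxter operator of weight 0 (i.e. [R(x),R(y)] = R([R(x),y] + [x,R(y)]) for all x, y ∈ L) such that R∘α = α∘R and R∘β = β∘R. Define a new operation on L by x·y = [R(x), y]. Then (L, ·, α, β) is a left BiHom-pre-Lie algebra. -/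
/-- If `(L, [·,·], α, β)` is a left BiHom-Lie algebra and `R` is a
Rota-Baxter operator of weight 0 commuting with `α` and `β`, then `x·y = [R(x), y]`
makes `(L, ·, α, β)` a left BiHom-pre-Lie algebra. -/
theorem rota_baxter_left_biHomLie_to_preLie {k L : Type*} [Field k] [AddCommGroup L] [Module k L]
    (br : L →ₗ[k] L →ₗ[k] L) (α β : L →ₗ[k] L) (R : L →ₗ[k] L)
    (hcomm : ∀ x, α (β x) = β (α x))
    (hα : ∀ x y, α (br x y) = br (α x) (α y))
    (hβ : ∀ x y, β (br x y) = br (β x) (β y))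
    (hleib : ∀ x y z, br (α (β x)) (br y z) = br (br (β x) y) (β z) + br (β y) (br (α x) z))
    (hskew : ∀ x y, br (β x) (α y) = - br (β y) (α x))
    (hRB : ∀ x y, br (R x) (R y) = R (br (R x) y + br x (R y)))
    (hRα : ∀ x, R (α x) = α (R x))
    (hRβ : ∀ x, R (β x) = β (R x))
    (m : L → L → L) (hm : ∀ x y, m x y = br (R x) y) :
    (∀ x, α (β x) = β (α x)) ∧
    (∀ x y, α (m x y) = m (α x) (α y)) ∧
    (∀ x y, β (m x y) = m (β x) (β y)) ∧
    (∀ x y z, m (α (β x)) (m (α y) z) - m (m (β x) (α y)) (β z)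
      = m (α (β y)) (m (α x) z) - m (m (β y) (α x)) (β z)) := by
  refine ⟨hcomm, ?_, ?_, ?_⟩
  · intro x y; rw [hm, hm, hα, hRα]
  · intro x y; rw [hm, hm, hβ, hRβ]
  · intro x y z
    simp only [hm]
    have h1 := hleib (R x) (R (α y)) z
    rw [← hRβ, ← hRβ, ← hRα, ← hRα, ← hcomm, hRB] at h1
    have hs := hskew x (R y)
    rw [← hRα, ← hRβ] at hs
    rw [hs] at h1
    simp only [map_add, map_neg, LinearMap.add_apply, LinearMap.neg_apply] at h1
    rw [h1]
    abel
end

section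
/- Let (L, [·,·], α, β) be a right BiHom-Lie algebra and let R : L → L be a Rota-Baxter operator of weight 0 (i.e. [R(x),R(y)] = R([R(x),y] + [x,R(y)]) for all x, y ∈ L) such that R∘α = α∘R and R∘β = β∘R. Define a new operation on L by x·y = [x, R(y)]. Then (L, ·, α, β) is a right BiHom-pre-Lie algebra. -/
/-- If `(L, [·,·], α, β)` is a right BiHom-Lie algebra and `R` is a
Rota-Baxter operator of weight 0 commuting with `α` and `β`, then `x·y = [x, R(y)]`
makes `(L, ·, α, β)` a right BiHom-pre-Lie algebra. -/
theorem rota_baxter_right_biHomLie_to_preLie {k L : Type*} [Field k] [AddCommGroup L] [Module k L]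
    (br : L →ₗ[k] L →ₗ[k] L) (α β : L →ₗ[k] L) (R : L →ₗ[k] L)
    (hcomm : ∀ x, α (β x) = β (α x))
    (hα : ∀ x y, α (br x y) = br (α x) (α y))
    (hβ : ∀ x y, β (br x y) = br (β x) (β y))
    (hleib : ∀ x y z, br (br x y) (α (β z)) = br (br x (β z)) (α y) + br (α x) (br y (α z)))
    (hskew : ∀ x y, br (β x) (α y) = - br (β y) (α x))
    (hRB : ∀ x y, br (R x) (R y) = R (br (R x) y + br x (R y)))
    (hRα : ∀ x, R (α x) = α (R x))
    (hRβ : ∀ x, R (β x) = β (R x))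
    (m : L → L → L) (hm : ∀ x y, m x y = br x (R y)) :
    (∀ x, α (β x) = β (α x)) ∧
    (∀ x y, α (m x y) = m (α x) (α y)) ∧
    (∀ x y, β (m x y) = m (β x) (β y)) ∧
    (∀ x y z, m (α x) (m (β y) (α z)) - m (m x (β y)) (α (β z))
      = m (α x) (m (β z) (α y)) - m (m x (β z)) (α (β y))) := by
  refine ⟨hcomm, ?_, ?_, ?_⟩
  · intro x y; rw [hm, hm, hα, hRα]
  · intro x y; rw [hm, hm, hβ, hRβ]
  · intro x y z
    simp only [hm, hRα, hRβ]
    have h1 := hleib x (R (β y)) (R z)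
    simp only [hRα, hRβ] at h1
    have h2 := hRB (β y) (α z)
    simp only [hRα, hRβ, map_add] at h2
    have h3 := hskew (R y) z
    rw [h1, h2, h3]; simp only [map_add, map_neg]
    abel
end

section
/- Let (L, [·,·], α, β) be a BiHom-Lie algebra, λ a scalar, and R : L → L a Rota-Baxter operator of weight λ (i.e. [R(x),R(y)] = R([R(x),y] + [x,R(y)] + λ[x,y]) for all x, y ∈ L) such that R∘α = α∘R and R∘β = β∘R. Define a new multiplication on L by {x,y} = [R(x),y] + [x,R(y)] + λ[x,y] for all x, y ∈ L. Then (L, {·,·}, α, β) is a BiHom-Lie algebra. -/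
/-- If `(L, [·,·], α, β)` is a BiHom-Lie algebra and `R` is a Rota-Baxter
operator of weight `λ` commuting with `α` and `β`, then
`{x,y} = [R(x),y] + [x,R(y)] + λ[x,y]` makes `(L, {·,·}, α, β)` a BiHom-Lie algebra. -/
theorem rota_baxter_biHomLie {k L : Type*} [Field k] [AddCommGroup L] [Module k L]
    (br : L →ₗ[k] L →ₗ[k] L) (α β : L →ₗ[k] L) (lam : k) (R : L →ₗ[k] L)
    (hcomm : ∀ x, α (β x) = β (α x))
    (hα : ∀ x y, α (br x y) = br (α x) (α y))
    (hβ : ∀ x y, β (br x y) = br (β x) (β y))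
    (hskew : ∀ x y, br (β x) (α y) = - br (β y) (α x))
    (hjac : ∀ x y z, br (β (β x)) (br (β y) (α z)) + br (β (β y)) (br (β z) (α x))
      + br (β (β z)) (br (β x) (α y)) = 0)
    (hRB : ∀ x y, br (R x) (R y) = R (br (R x) y + br x (R y) + lam • br x y))
    (hRα : ∀ x, R (α x) = α (R x))
    (hRβ : ∀ x, R (β x) = β (R x))
    (nb : L → L → L)
    (hnb : ∀ x y, nb x y = br (R x) y + br x (R y) + lam • br x y) :
    (∀ x, α (β x) = β (α x)) ∧
    (∀ x y, α (nb x y) = nb (α x) (α y)) ∧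
    (∀ x y, β (nb x y) = nb (β x) (β y)) ∧
    (∀ x y, nb (β x) (α y) = - nb (β y) (α x)) ∧
    (∀ x y z, nb (β (β x)) (nb (β y) (α z)) + nb (β (β y)) (nb (β z) (α x))
      + nb (β (β z)) (nb (β x) (α y)) = 0) := by

  refine ⟨hcomm, ?_, ?_, ?_, ?_⟩
  · intro x y
    simp [hnb, hα, hRα, smul_add]
  · intro x y
    simp [hnb, hβ, hRβ, smul_add]
  · intro x y
    simp only [hnb, hRα, hRβ]
    rw [hskew (R x) y, hskew x (R y), hskew x y]
    module
  · intro x y z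
    simp only [hnb]
    rw [← hRB (β y) (α z), ← hRB (β z) (α x), ← hRB (β x) (α y)]
    simp only [map_add, map_smul, LinearMap.add_apply, LinearMap.smul_apply, hRα, hRβ]
    linear_combination (norm := module) hjac (R x) (R y) z + hjac x (R y) (R z)
      + hjac (R x) y (R z) + lam • (hjac (R x) y z + hjac x (R y) z + hjac x y (R z))
      + (lam * lam) • hjac x y z
end

section
/- Let (L, [·,·], α, β) be a left BiHom-Leibniz algebra, λ a scalar, and R : L → L a Rota-Baxter operator of weight λ (i.e. [R(x),R(y)] = R([R(x),y] + [x,R(y)] + λ[x,y]) for all x, y ∈ L) such that R∘α = α∘R and R∘β = β∘R. Define a new multiplication on L by {x,y} = [R(x),y] + [x,R(y)] + λ[x,y] for all x, y ∈ L. Then (L, {·,·}, α, β) is a left BiHom-Leibniz algebra. -/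
/-- If `(L, [·,·], α, β)` is a left BiHom-Leibniz algebra and `R` is a
Rota-Baxter operator of weight `λ` commuting with `α` and `β`, then
`{x,y} = [R(x),y] + [x,R(y)] + λ[x,y]` makes `(L, {·,·}, α, β)` a left BiHom-Leibniz
algebra. -/
theorem rota_baxter_left_biHom_leibniz {k L : Type*} [Field k] [AddCommGroup L] [Module k L]
    (br : L →ₗ[k] L →ₗ[k] L) (α β : L →ₗ[k] L) (lam : k) (R : L →ₗ[k] L)
    (hcomm : ∀ x, α (β x) = β (α x))
    (hα : ∀ x y, α (br x y) = br (α x) (α y))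
    (hβ : ∀ x y, β (br x y) = br (β x) (β y))
    (hleib : ∀ x y z, br (α (β x)) (br y z) = br (br (β x) y) (β z) + br (β y) (br (α x) z))
    (hRB : ∀ x y, br (R x) (R y) = R (br (R x) y + br x (R y) + lam • br x y))
    (hRα : ∀ x, R (α x) = α (R x))
    (hRβ : ∀ x, R (β x) = β (R x))
    (nb : L → L → L)
    (hnb : ∀ x y, nb x y = br (R x) y + br x (R y) + lam • br x y) :
    (∀ x, α (β x) = β (α x)) ∧
    (∀ x y, α (nb x y) = nb (α x) (α y)) ∧
    (∀ x y, β (nb x y) = nb (β x) (β y)) ∧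
    (∀ x y z, nb (α (β x)) (nb y z) = nb (nb (β x) y) (β z) + nb (β y) (nb (α x) z)) := by
  refine ⟨hcomm, ?_, ?_, ?_⟩
  · intro x y
    simp only [hnb, map_add, map_smul, hα, ← hRα]
  · intro x y
    simp only [hnb, map_add, map_smul, hβ, ← hRβ]
  · intro x y z
    simp only [hnb]
    simp only [← hRB]
    simp only [hRα, hRβ, map_add, map_smul, LinearMap.add_apply, LinearMap.smul_apply]
    simp only [hleib, map_add, map_smul, LinearMap.add_apply, LinearMap.smul_apply]
    module
end
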